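/- arXiv:1609.09037 — 3 statements merged into one kernel-verified Lean document; each statement's English description precedes it below -/
import Mathlib

section
/- Let U : Ω → (ι → ℝ) be measurable random utilities with each coordinate U i integrable, and let d : Ω → Option ι be measurable. If for every ω the decision d ω is user-optimal for prices q : ι → ℝ and utilities U ω, then the expected social welfare ∫ welfare(q, U ω, d ω) dℙ is at most ∫ max(max_{i}(U ω i − c i), 0) dℙ; moreover, if q i = c i for all i, equality holds for every such measurable user-optimal d. (Paper's Corollary 1: the marginal-cost pricing p = c maximizes the ex-post, hence also the expected, social welfare.) -/
open Finset MeasureTheory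

/-- A decision `d` is user-optimal for prices `q` and utilities `u`. -/
def userOptimal {ι : Type*} [Fintype ι] (q u : ι → ℝ) : Option ι → Prop
  | some i => 0 ≤ u i - q i ∧ ∀ j, u j - q j ≤ u i - q i
  | none => ∀ j, u j - q j < 0

/-- Social welfare of a decision: `u i - c i` if option `i` is accepted, `0` otherwise. -/
def welfare {ι : Type*} (c u : ι → ℝ) : Option ι → ℝ
  | some i => u i - c i
  | none => 0

/-- Expected social welfare is at most the expectation of `max (max_i (U i - c i)) 0`,
and marginal-cost pricing `q = c` achieves this bound for every measurable
pointwise user-optimal decision rule. -/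
theorem expected_welfare_le_and_eq {ι : Type*} [Fintype ι] [Nonempty ι]
    {Ω : Type*} [MeasurableSpace Ω] (ℙ : Measure Ω) [IsProbabilityMeasure ℙ]
    (c q : ι → ℝ) (U : Ω → ι → ℝ) (hU : Measurable U)
    (hUint : ∀ i, Integrable (fun ω => U ω i) ℙ)
    (d : Ω → Option ι) (hd : ∀ o : Option ι, MeasurableSet {ω | d ω = o})
    (hopt : ∀ ω, userOptimal q (U ω) (d ω)) :
    (∫ ω, welfare c (U ω) (d ω) ∂ℙ) ≤
      (∫ ω, max (univ.sup' univ_nonempty (fun i => U ω i - c i)) 0 ∂ℙ) ∧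
    ((∀ i, q i = c i) →
      (∫ ω, welfare c (U ω) (d ω) ∂ℙ) =
        (∫ ω, max (univ.sup' univ_nonempty (fun i => U ω i - c i)) 0 ∂ℙ)) := by
  classical
  -- the target function
  set g : Ω → ℝ := fun ω => max (univ.sup' univ_nonempty (fun i => U ω i - c i)) 0 with hg
  -- welfare as a finite sum of indicators
  have hwsum : ∀ ω, welfare c (U ω) (d ω) =
      ∑ i, Set.indicator {ω | d ω = some i} (fun ω => U ω i - c i) ω := by
    intro ω
    cases h : d ω with
    | none =>
      simp only [welfare]
      refine (Finset.sum_eq_zero ?_).symm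
      intro i _
      apply Set.indicator_of_notMem
      simp [h]
    | some i =>
      simp only [welfare]
      rw [Finset.sum_eq_single i]
      · rw [Set.indicator_of_mem]; exact h
      · intro j _ hj
        apply Set.indicator_of_notMem
        simp only [Set.mem_setOf_eq, h, Option.some.injEq]
        exact fun e => hj e.symm
      · intro hi; exact absurd (Finset.mem_univ i) hi
  have hint_w : Integrable (fun ω => welfare c (U ω) (d ω)) ℙ := by
    have : Integrable (fun ω => ∑ i, Set.indicator {ω | d ω = some i}
        (fun ω => U ω i - c i) ω) ℙ := by
      apply integrable_finset_sum
      intro i _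
      exact ((hUint i).sub (integrable_const (c i))).indicator (hd (some i))
    exact this.congr (Filter.Eventually.of_forall fun ω => (hwsum ω).symm)
  have hmeas_g : Measurable g := by
    apply Measurable.max _ measurable_const
    have hm : Measurable (univ.sup' (univ_nonempty) (fun i (ω : Ω) => U ω i - c i)) :=
      Finset.measurable_sup' _ fun i _ =>
        ((measurable_pi_apply i).comp hU).sub measurable_const
    have heq : (fun ω : Ω => univ.sup' univ_nonempty fun i => U ω i - c i) =
        univ.sup' univ_nonempty (fun i (ω : Ω) => U ω i - c i) := by
      funext ω; rw [Finset.sup'_apply]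
    exact heq ▸ hm
  have hint_g : Integrable g ℙ := by
    have hbound : Integrable (fun ω => ∑ i, |U ω i - c i|) ℙ :=
      integrable_finset_sum _ fun i _ => ((hUint i).sub (integrable_const (c i))).abs
    refine hbound.mono' hmeas_g.aestronglyMeasurable ?_
    refine Filter.Eventually.of_forall fun ω => ?_
    have h0 : 0 ≤ g ω := le_max_right _ _
    rw [Real.norm_eq_abs, abs_of_nonneg h0]
    obtain ⟨i, _, hi⟩ := Finset.exists_mem_eq_sup' univ_nonempty (fun i => U ω i - c i)
    have : g ω ≤ |U ω i - c i| := by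
      simp only [hg, hi]
      exact max_le (le_abs_self _) (abs_nonneg _)
    exact this.trans (Finset.single_le_sum (f := fun j => |U ω j - c j|)
      (fun j _ => abs_nonneg _) (Finset.mem_univ i))
  have hle : ∀ ω, welfare c (U ω) (d ω) ≤ g ω := by
    intro ω
    cases h : d ω with
    | none => simp only [welfare]; exact le_max_right _ _
    | some i =>
      simp only [welfare]
      exact le_trans (Finset.le_sup' (fun i => U ω i - c i) (Finset.mem_univ i))
        (le_max_left _ _)
  constructor
  · exact integral_mono hint_w hint_g hle
  · intro hq
    refine integral_congr_ae (Filter.Eventually.of_forall fun ω => ?_)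
    have hopt' := hopt ω
    cases h : d ω with
    | none =>
      rw [h] at hopt'
      have hlt : univ.sup' univ_nonempty (fun i => U ω i - c i) < 0 := by
        rw [Finset.sup'_lt_iff]
        intro i _
        have := hopt' i
        rwa [hq i] at this
      beta_reduce
      rw [h]
      simp only [welfare, hg]
      rw [max_eq_right hlt.le]
    | some i =>
      rw [h] at hopt'
      obtain ⟨h1, h2⟩ := hopt'
      rw [hq i] at h1
      have hsup : univ.sup' univ_nonempty (fun j => U ω j - c j) = U ω i - c i := by
        apply le_antisymm
        · rw [Finset.sup'_le_iff]
          intro j _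
          have := h2 j
          rwa [hq i, hq j] at this
        · exact Finset.le_sup' (f := fun j => U ω j - c j) (Finset.mem_univ i)
      beta_reduce
      rw [h]
      simp only [welfare, hg, hsup, max_eq_left h1]
end

section
/- Assume the additive-noise utilities of Assumption 1: U i (ω) = (Y i + X ω)⁺ with Y : ι → ℝ deterministic, X : Ω → ℝ a real random variable, and ℙ(∀ i, Y i + X ≥ 0) = 1. Define g(β) = β · max_{i ∈ ι} ℙ(X ≥ c i + β − Y i) and suppose ζ ≥ 0 satisfies g(β) ≤ g(ζ) for all β ≥ 0. Then: (a) with prices p i = c i + ζ, every measurable decision rule d : Ω → Option ι that is user-optimal pointwise for (p, U ω) has expected profit exactly g(ζ); and (b) for every price vector q : ι → ℝ and every measurable decision rule d : Ω → Option ι that is user-optimal pointwise for (q, U ω), the expected profit is at most g(ζ). Hence the pricing p i = c i + ζ maximizes the charging station's expected profit over all price menus. (Paper's Theorem 7.) -/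
/-! Almost surely the utilities are `Y i + X`, so a user buys iff `X ≥ min_i (q i - Y i)`, and then
buys an option maximizing `Y i - q i`. With the uniform margin `ζ` every purchase earns `ζ`, so the
expected profit is `ζ · ℙ(X ≥ min_i (c i + ζ - Y i)) = g ζ`. For arbitrary prices let `b` be the
best margin among the maximizers of `Y i - q i`, attained at `k`: every purchase earns at most `b`
and happens only when `X ≥ q k - Y k = c k + b - Y k`, so the expected profit is at most
`b⁺ · ℙ(X ≥ c k + b⁺ - Y k) ≤ g b⁺ ≤ g ζ`. -/

open Finset MeasureTheory

/-- Profit of a decision: `q i - c i` if option `i` is accepted, `0` otherwise. -/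
def profit {ι : Type*} (q c : ι → ℝ) : Option ι → ℝ
  | some i => q i - c i
  | none => 0

lemma Antitone.map_finset_inf' {ι α β : Type*} [LinearOrder α] [LinearOrder β] {f : α → β}
    (hf : Antitone f) {s : Finset ι} (hs : s.Nonempty) (a : ι → α) :
    f (s.inf' hs a) = s.sup' hs (f ∘ a) := by
  obtain ⟨i, hi, hmin⟩ := s.exists_mem_eq_inf' hs a
  exact le_antisymm (hmin ▸ le_sup' (f ∘ a) hi) (sup'_le hs _ fun j hj => hf (inf'_le a hj))

lemma integrable_comp_of_measurableSet_fiber {Ω α E : Type*} [MeasurableSpace Ω] [Finite α]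
    [NormedAddCommGroup E] (μ : Measure Ω) [IsFiniteMeasure μ] {d : Ω → α}
    (hd : ∀ a, MeasurableSet {ω | d ω = a}) (f : α → E) :
    Integrable (fun ω => f (d ω)) μ :=
  (SimpleFunc.map f ⟨d, fun a => hd a, Set.toFinite _⟩).integrable_of_isFiniteMeasure

section LevelSets

variable {Ω : Type*} [MeasurableSpace Ω] (ℙ : Measure Ω)

lemma antitone_toReal_measure_setOf_le [IsFiniteMeasure ℙ] (X : Ω → ℝ) :
    Antitone fun a => (ℙ {ω | a ≤ X ω}).toReal := fun _ _ hab =>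
  ENNReal.toReal_mono (measure_ne_top _ _) (measure_mono fun _ h => hab.trans h)

lemma integral_indicator_setOf_le {X : Ω → ℝ} (hX : Measurable X) (a b : ℝ) :
    ∫ ω, {ω | a ≤ X ω}.indicator (fun _ => b) ω ∂ℙ = b * (ℙ {ω | a ≤ X ω}).toReal := by
  rw [integral_indicator_const _ (measurableSet_le measurable_const hX), smul_eq_mul, mul_comm,
    Measure.real_def]

lemma ae_eq_add_of_measure_add_nonneg_eq_one [IsProbabilityMeasure ℙ] {ι : Type*} [Countable ι]
    {X : Ω → ℝ} {Y : ι → ℝ} (hX : Measurable X) {U : Ω → ι → ℝ}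
    (hU : ∀ ω i, U ω i = max (Y i + X ω) 0)
    (hpos : ℙ {ω | ∀ i, 0 ≤ Y i + X ω} = 1) :
    ∀ᵐ ω ∂ℙ, U ω = fun i => Y i + X ω := by
  have hmeas : MeasurableSet {ω | ∀ i, 0 ≤ Y i + X ω} := by
    simp only [Set.ofPred_forall]
    exact .iInter fun i => measurableSet_le measurable_const (measurable_const.add hX)
  filter_upwards [(ae_mem_iff_measure_eq hmeas.nullMeasurableSet).2 (by rw [hpos, measure_univ])]
    with ω hω
  exact funext fun i => (hU ω i).trans (max_eq_left (hω i))

end LevelSets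

section UserOptimal

variable {ι : Type*} [Fintype ι] [Nonempty ι]

theorem profit_eq_indicator_of_userOptimal {c Y : ι → ℝ} {ζ x : ℝ} {d : Option ι}
    (hd : userOptimal (fun i => c i + ζ) (fun i => Y i + x) d) :
    profit (fun i => c i + ζ) c d =
      (Set.Ici (univ.inf' univ_nonempty fun i => c i + ζ - Y i)).indicator (fun _ => ζ) x := by
  cases d with
  | none =>
    have hx : x < univ.inf' univ_nonempty (fun i => c i + ζ - Y i) :=
      (lt_inf'_iff _).2 fun j _ => by linarith [hd j]
    exact (Set.indicator_of_notMem (Set.notMem_Ici.2 hx) _).symm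
  | some i =>
    have hx : univ.inf' univ_nonempty (fun i => c i + ζ - Y i) ≤ x :=
      (inf'_le_iff _).2 ⟨i, mem_univ i, by linarith [hd.1]⟩
    rw [Set.indicator_of_mem (Set.mem_Ici.2 hx)]
    exact add_sub_cancel_left (c i) ζ

theorem exists_profit_le_indicator (q c Y : ι → ℝ) :
    ∃ i b, 0 ≤ b ∧ ∀ x d, userOptimal q (fun j => Y j + x) d →
      profit q c d ≤ (Set.Ici (c i + b - Y i)).indicator (fun _ => b) x := by
  classical
  set A := univ.filter fun i => ∀ j, Y j - q j ≤ Y i - q i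
  have hA : A.Nonempty := by
    obtain ⟨i, -, hi⟩ := univ.exists_max_image (fun i => Y i - q i) univ_nonempty
    exact ⟨i, mem_filter.2 ⟨mem_univ i, fun j => hi j (mem_univ j)⟩⟩
  obtain ⟨k, hkA, hk⟩ := A.exists_max_image (fun i => q i - c i) hA
  refine ⟨k, max (q k - c k) 0, le_max_right _ _, fun x d hd => ?_⟩
  have hnonneg := Set.indicator_nonneg (s := Set.Ici (c k + max (q k - c k) 0 - Y k))
    (fun _ _ => le_max_right (q k - c k) 0) x
  cases d with
  | none => exact hnonneg
  | some i =>
    have hiA : i ∈ A := mem_filter.2 ⟨mem_univ i, fun j => by linarith [hd.2 j]⟩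
    have hki : Y k - q k = Y i - q i :=
      le_antisymm ((mem_filter.1 hiA).2 k) ((mem_filter.1 hkA).2 i)
    have hik : q i - c i ≤ q k - c k := hk i hiA
    rcases le_total 0 (q k - c k) with hpos | hneg
    · have hx : c k + max (q k - c k) 0 - Y k ≤ x := by linarith [max_eq_left hpos, hd.1]
      rw [Set.indicator_of_mem (Set.mem_Ici.2 hx), max_eq_left hpos]
      exact hik
    · exact (hik.trans hneg).trans hnonneg

end UserOptimal

theorem fixed_profit_pricing_optimal_general {ι : Type*} [Fintype ι] [Nonempty ι]
    {Ω : Type*} [MeasurableSpace Ω] (ℙ : Measure Ω) [IsProbabilityMeasure ℙ]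
    (c Y : ι → ℝ) (X : Ω → ℝ) (hX : Measurable X)
    (U : Ω → ι → ℝ) (hUdef : ∀ ω i, U ω i = max (Y i + X ω) 0)
    (hpos : ℙ {ω | ∀ i, 0 ≤ Y i + X ω} = 1)
    (g : ℝ → ℝ)
    (hg : ∀ β, g β = β * univ.sup' univ_nonempty
      (fun i => (ℙ {ω | c i + β - Y i ≤ X ω}).toReal))
    (ζ : ℝ) (hζmax : ∀ β, 0 ≤ β → g β ≤ g ζ)
    (p : ι → ℝ) (hp : ∀ i, p i = c i + ζ) :
    (∀ d : Ω → Option ι, (∀ o : Option ι, MeasurableSet {ω | d ω = o}) →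
      (∀ ω, userOptimal p (U ω) (d ω)) →
      (∫ ω, profit p c (d ω) ∂ℙ) = g ζ) ∧
    (∀ q : ι → ℝ, ∀ d : Ω → Option ι, (∀ o : Option ι, MeasurableSet {ω | d ω = o}) →
      (∀ ω, userOptimal q (U ω) (d ω)) →
      (∫ ω, profit q c (d ω) ∂ℙ) ≤ g ζ) := by
  have hU := ae_eq_add_of_measure_add_nonneg_eq_one ℙ hX hUdef hpos
  obtain rfl : p = fun i => c i + ζ := funext hp
  refine ⟨fun d _ hopt => ?_, fun q d hd hopt => ?_⟩
  · have hprofit : ∀ᵐ ω ∂ℙ, profit (fun i => c i + ζ) c (d ω) =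
        {ω | univ.inf' univ_nonempty (fun i => c i + ζ - Y i) ≤ X ω}.indicator (fun _ => ζ) ω := by
      filter_upwards [hU] with ω hω
      exact profit_eq_indicator_of_userOptimal (hω ▸ hopt ω)
    rw [integral_congr_ae hprofit, integral_indicator_setOf_le ℙ hX, hg,
      (antitone_toReal_measure_setOf_le ℙ X).map_finset_inf']
    rfl
  · obtain ⟨i, b, hb, hbound⟩ := exists_profit_le_indicator q c Y
    have hle : ∀ᵐ ω ∂ℙ, profit q c (d ω) ≤ {ω | c i + b - Y i ≤ X ω}.indicator (fun _ => b) ω := by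
      filter_upwards [hU] with ω hω
      exact hbound (X ω) (d ω) (hω ▸ hopt ω)
    calc ∫ ω, profit q c (d ω) ∂ℙ
        ≤ ∫ ω, {ω | c i + b - Y i ≤ X ω}.indicator (fun _ => b) ω ∂ℙ :=
          integral_mono_ae (integrable_comp_of_measurableSet_fiber ℙ hd _)
            ((integrable_const b).indicator (measurableSet_le measurable_const hX)) hle
      _ = b * (ℙ {ω | c i + b - Y i ≤ X ω}).toReal := integral_indicator_setOf_le ℙ hX _ _
      _ ≤ g b := by
          rw [hg]
          gcongr
          exact le_sup' (fun i => (ℙ {ω | c i + b - Y i ≤ X ω}).toReal) (mem_univ i)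
      _ ≤ g ζ := hζmax b hb

/-- Theorem 7 of the paper: under additive-noise utilities `U i = (Y i + X)⁺` with
`ℙ(∀ i, Y i + X ≥ 0) = 1`, let `g β = β · max_i ℙ(X ≥ c i + β - Y i)` and let
`ζ ≥ 0` maximize `g` over `β ≥ 0`. Then (a) the pricing `p i = c i + ζ` has expected
profit exactly `g ζ` for every measurable pointwise user-optimal decision rule; and
(b) any price menu `q` with any measurable pointwise user-optimal decision rule has
expected profit at most `g ζ`. Thus `p i = c i + ζ` maximizes the expected profit. -/
theorem fixed_profit_pricing_optimal {ι : Type*} [Fintype ι] [Nonempty ι]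
    {Ω : Type*} [MeasurableSpace Ω] (ℙ : Measure Ω) [IsProbabilityMeasure ℙ]
    (c Y : ι → ℝ) (X : Ω → ℝ) (hX : Measurable X)
    (U : Ω → ι → ℝ) (hUdef : ∀ ω i, U ω i = max (Y i + X ω) 0)
    (hpos : ℙ {ω | ∀ i, 0 ≤ Y i + X ω} = 1)
    (g : ℝ → ℝ)
    (hg : ∀ β, g β = β * univ.sup' univ_nonempty
      (fun i => (ℙ {ω | c i + β - Y i ≤ X ω}).toReal))
    (ζ : ℝ) (hζ : 0 ≤ ζ) (hζmax : ∀ β, 0 ≤ β → g β ≤ g ζ)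
    (p : ι → ℝ) (hp : ∀ i, p i = c i + ζ) :
    (∀ d : Ω → Option ι, (∀ o : Option ι, MeasurableSet {ω | d ω = o}) →
      (∀ ω, userOptimal p (U ω) (d ω)) →
      (∫ ω, profit p c (d ω) ∂ℙ) = g ζ) ∧
    (∀ q : ι → ℝ, ∀ d : Ω → Option ι, (∀ o : Option ι, MeasurableSet {ω | d ω = o}) →
      (∀ ω, userOptimal q (U ω) (d ω)) →
      (∫ ω, profit q c (d ω) ∂ℙ) ≤ g ζ) :=
  fixed_profit_pricing_optimal_general ℙ c Y X hX U hUdef hpos g hg ζ hζmax p hp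
end

section
/- Assume the additive-noise utilities of Assumption 1: U i (ω) = (Y i + X ω)⁺ with Y : ι → ℝ deterministic, X : Ω → ℝ a real random variable, and ℙ(∀ i, Y i + X ≥ 0) = 1. Then for every price vector q : ι → ℝ and every measurable decision rule d : Ω → Option ι that is user-optimal pointwise for (q, U ω), the expected profit is at most max_{i ∈ ι} (q i − c i)⁺ · ℙ(U i ≥ q i), where x⁺ = max(x, 0). (Intermediate upper bound on the expected profit from the paper's proof of Theorem 7.) -/
/-!
Outside a null set the utilities are `U i = Y i + X`, so the noise `X` cancels from every
comparison between options: a user-optimal choice is always a maximiser of `Y i - q i`, and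
it is accepted only when every such maximiser `i₀` satisfies `q i₀ ≤ U i₀`. Choosing `i₀` among
the maximisers with the largest margin `(q i₀ - c i₀)⁺`, the profit is pointwise at most that
margin on the event `{q i₀ ≤ U i₀}` and `0` off it; integrating gives the bound.
-/

open Finset MeasureTheory

lemma Finite.exists_max_lex {α β γ : Type*} [Finite α] [Nonempty α]
    [LinearOrder β] [LinearOrder γ] (f : α → β) (g : α → γ) :
    ∃ a₀, ∀ a, f a ≤ f a₀ ∧ (f a = f a₀ → g a ≤ g a₀) := by
  obtain ⟨a₀, ha₀⟩ := Finite.exists_max fun a => toLex (f a, g a)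
  exact ⟨a₀, fun a => Prod.Lex.toLex_le_toLex'.mp (ha₀ a)⟩

lemma MeasureTheory.integral_mono_of_nonneg_right {α : Type*} [MeasurableSpace α] {μ : Measure α}
    {f g : α → ℝ} (hg : 0 ≤ᵐ[μ] g) (hgi : Integrable g μ) (h : f ≤ᵐ[μ] g) :
    ∫ a, f a ∂μ ≤ ∫ a, g a ∂μ := by
  by_cases hfi : Integrable f μ
  · exact integral_mono_ae hfi hgi h
  · rw [integral_undef hfi]
    exact integral_nonneg_of_ae hg

lemma profit_le_ite_of_userOptimal {ι : Type*} [Fintype ι] {q c Y u : ι → ℝ} {x : ℝ} {i₀ : ι}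
    (hu : ∀ j, u j = Y j + x)
    (hmax : ∀ j, Y j - q j ≤ Y i₀ - q i₀ ∧
      (Y j - q j = Y i₀ - q i₀ → max (q j - c j) 0 ≤ max (q i₀ - c i₀) 0))
    {d : Option ι} (hd : userOptimal q u d) :
    profit q c d ≤ if q i₀ ≤ u i₀ then max (q i₀ - c i₀) 0 else 0 := by
  cases d with
  | none =>
    change (0 : ℝ) ≤ _
    split_ifs <;> simp
  | some i =>
    obtain ⟨haccept, hbest⟩ := hd
    have hbest₀ := hbest i₀
    simp only [hu] at haccept hbest₀ ⊢
    have htie : Y i - q i = Y i₀ - q i₀ := le_antisymm (hmax i).1 (by linarith)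
    rw [if_pos (by linarith)]
    exact (le_max_left _ _).trans ((hmax i).2 htie)

theorem expected_profit_upper_bound_general {ι : Type*} [Fintype ι] [Nonempty ι]
    {Ω : Type*} [MeasurableSpace Ω] (ℙ : Measure Ω) [IsProbabilityMeasure ℙ]
    (c Y : ι → ℝ) (X : Ω → ℝ) (hX : Measurable X)
    (U : Ω → ι → ℝ) (hUdef : ∀ ω i, U ω i = max (Y i + X ω) 0)
    (hpos : ℙ {ω | ∀ i, 0 ≤ Y i + X ω} = 1)
    (q : ι → ℝ) (d : Ω → Option ι)
    (hopt : ∀ ω, userOptimal q (U ω) (d ω)) :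
    (∫ ω, profit q c (d ω) ∂ℙ) ≤
      univ.sup' univ_nonempty
        (fun i => max (q i - c i) 0 * (ℙ {ω | q i ≤ U ω i}).toReal) := by
  obtain ⟨i₀, hmax⟩ :=
    Finite.exists_max_lex (fun j => Y j - q j) (fun j => max (q j - c j) 0)
  set E := {ω | q i₀ ≤ U ω i₀}
  have hE : MeasurableSet E := by
    simp only [E, hUdef]
    exact measurableSet_le measurable_const ((hX.const_add _).max measurable_const)
  have hnoise : ∀ᵐ ω ∂ℙ, ∀ i, 0 ≤ Y i + X ω := by
    rw [ae_iff_measure_eq, hpos, measure_univ]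
    simp only [Set.ofPred_forall]
    exact .iInter fun i => (measurableSet_le measurable_const (hX.const_add _)).nullMeasurableSet
  have hbound : ∀ᵐ ω ∂ℙ, profit q c (d ω) ≤ E.indicator (fun _ => max (q i₀ - c i₀) 0) ω := by
    filter_upwards [hnoise] with ω hω
    rw [Set.indicator_apply]
    exact profit_le_ite_of_userOptimal (fun j => by rw [hUdef, max_eq_left (hω j)]) hmax (hopt ω)
  calc ∫ ω, profit q c (d ω) ∂ℙ
      ≤ ∫ ω, E.indicator (fun _ => max (q i₀ - c i₀) 0) ω ∂ℙ :=
        integral_mono_of_nonneg_right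
          (.of_forall fun _ => Set.indicator_nonneg (fun _ _ => le_max_right _ _) _)
          ((integrable_const _).indicator hE) hbound
    _ = max (q i₀ - c i₀) 0 * (ℙ E).toReal := by
        rw [integral_indicator_const _ hE, smul_eq_mul, mul_comm, measureReal_def]
    _ ≤ _ := le_sup' (fun i => max (q i - c i) 0 * (ℙ {ω | q i ≤ U ω i}).toReal) (mem_univ i₀)

/-- Intermediate upper bound in the paper's proof of Theorem 7: under additive-noise
utilities `U i = (Y i + X)⁺` with `ℙ(∀ i, Y i + X ≥ 0) = 1`, any price menu `q` with
any measurable pointwise user-optimal decision rule has expected profit at most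
`max_i (q i - c i)⁺ · ℙ(U i ≥ q i)`. -/
theorem expected_profit_upper_bound {ι : Type*} [Fintype ι] [Nonempty ι]
    {Ω : Type*} [MeasurableSpace Ω] (ℙ : Measure Ω) [IsProbabilityMeasure ℙ]
    (c Y : ι → ℝ) (X : Ω → ℝ) (hX : Measurable X)
    (U : Ω → ι → ℝ) (hUdef : ∀ ω i, U ω i = max (Y i + X ω) 0)
    (hpos : ℙ {ω | ∀ i, 0 ≤ Y i + X ω} = 1)
    (q : ι → ℝ) (d : Ω → Option ι) (hd : ∀ o : Option ι, MeasurableSet {ω | d ω = o})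
    (hopt : ∀ ω, userOptimal q (U ω) (d ω)) :
    (∫ ω, profit q c (d ω) ∂ℙ) ≤
      univ.sup' univ_nonempty
        (fun i => max (q i - c i) 0 * (ℙ {ω | q i ≤ U ω i}).toReal) :=
  expected_profit_upper_bound_general ℙ c Y X hX U hUdef hpos q d hopt
end
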